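/- If ζ is a degree −1 operator on symmetric functions of the form ζ(s_λ) = Σ a_{λ,λ'} s_{λ'} over single-box removals, satisfying the Leibniz rule, and ζ(s_{(1)}) = 0 and ζ(s_{(2)}) = 0, then ζ is identically zero. -/

import Mathlib

/-- `Covers μ lam` : `μ` is obtained from `lam` by deleting a single box. -/
def Covers (mu lam : YoungDiagram) : Prop :=
  mu.cells ⊆ lam.cells ∧ lam.cells.card = mu.cells.card + 1

/-- The sum of the contents `j - i` of the boxes of `lam` that are not in `mu`. -/
def remContent (mu lam : YoungDiagram) : ℤ :=
  ∑ c ∈ lam.cells \ mu.cells, ((c.2 : ℤ) - (c.1 : ℤ))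

instance (mu lam : YoungDiagram) : Decidable (Covers mu lam) := by
  unfold Covers; infer_instance

instance : DecidableEq YoungDiagram :=
  fun a b => decidable_of_iff (a.cells = b.cells) (YoungDiagram.ext_iff).symm
/-- The one-row Young diagram `(k)`. -/
def rowYD (k : ℕ) : YoungDiagram := YoungDiagram.ofRowLens [k] (by intro a b _; simp)

/-- The hook-shaped Young diagram `(r, 1^a)` (for `r ≥ 1`). -/
def hookYD (r a : ℕ) : YoungDiagram where
  cells := ((Finset.range r).image fun j => (0, j)) ∪
    ((Finset.range (a + 1)).image fun i => (i, 0))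
  isLowerSet := by
    intro x y hxy hy
    obtain ⟨h1, h2⟩ : y.1 ≤ x.1 ∧ y.2 ≤ x.2 := Prod.le_def.mp hxy
    simp only [Finset.coe_union, Finset.coe_image, Finset.coe_range, Set.mem_union,
      Set.mem_image, Set.mem_Iio] at hy ⊢
    rcases hy with ⟨j, hj, hje⟩ | ⟨i, hi, hie⟩
    · have hx1 : x.1 = 0 := by rw [← hje]
      have hx2 : x.2 = j := by rw [← hje]
      left
      exact ⟨y.2, by omega, by
        have hy1 : y.1 = 0 := by omega
        rw [Prod.ext_iff]; exact ⟨hy1.symm, rfl⟩⟩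
    · have hx1 : x.1 = i := by rw [← hie]
      have hx2 : x.2 = 0 := by rw [← hie]
      right
      exact ⟨y.1, by omega, by
        have hy2 : y.2 = 0 := by omega
        rw [Prod.ext_iff]; exact ⟨rfl, hy2.symm⟩⟩

/-- `mu / lam` is a horizontal strip: no two of its boxes lie in the same column. -/
def IsHStrip (lam mu : YoungDiagram) : Prop :=
  lam.cells ⊆ mu.cells ∧ ∀ c ∈ mu.cells, c ∉ lam.cells → (c.1 + 1, c.2) ∉ mu.cells

instance (lam mu : YoungDiagram) : Decidable (IsHStrip lam mu) := by
  unfold IsHStrip; infer_instance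

open YoungDiagram Finset in
lemma mem_rowYD {k : ℕ} {c : ℕ × ℕ} : c ∈ rowYD k ↔ c.1 = 0 ∧ c.2 < k := by
  show c ∈ YoungDiagram.cellsOfRowLens [k] ↔ _
  rw [YoungDiagram.mem_cellsOfRowLens]
  constructor
  · rintro ⟨h, h2⟩
    simp only [List.length_singleton] at h
    interval_cases h1 : c.1 <;> simp_all
  · rintro ⟨h1, h2⟩
    exact ⟨by simp [h1], by simp [h1, h2]⟩

lemma rowLen_eq_of {μ : YoungDiagram} {i m : ℕ} (h : ∀ j, (i, j) ∈ μ ↔ j < m) :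
    μ.rowLen i = m := by
  rcases Nat.lt_trichotomy (μ.rowLen i) m with h' | h' | h'
  · have := (h _).2 h'
    rw [YoungDiagram.mem_iff_lt_rowLen] at this
    omega
  · exact h'
  · have := (h _).1 (YoungDiagram.mem_iff_lt_rowLen.2 h')
    omega

lemma rowLen_rowYD {k i : ℕ} : (rowYD k).rowLen i = if i = 0 then k else 0 := by
  apply rowLen_eq_of
  intro j
  rw [mem_rowYD]
  split <;> simp_all

lemma cells_rowYD {k : ℕ} : (rowYD k).cells = (Finset.range k).image fun j => ((0 : ℕ), j) := by
  ext c
  rw [YoungDiagram.mem_cells, mem_rowYD]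
  simp only [Finset.mem_image, Finset.mem_range]
  constructor
  · rintro ⟨h1, h2⟩; exact ⟨c.2, h2, by rw [← h1]⟩
  · rintro ⟨j, hj, rfl⟩; exact ⟨rfl, hj⟩

lemma card_rowYD {k : ℕ} : (rowYD k).cells.card = k := by
  rw [cells_rowYD, Finset.card_image_of_injective _ (fun a b h => by simpa using h),
    Finset.card_range]

lemma mem_hookYD {r a : ℕ} {c : ℕ × ℕ} :
    c ∈ hookYD r a ↔ (c.1 = 0 ∧ c.2 < r) ∨ (c.1 < a + 1 ∧ c.2 = 0) := by
  show c ∈ (hookYD r a).cells ↔ _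
  rw [hookYD]
  simp only [Finset.mem_union, Finset.mem_image, Finset.mem_range]
  constructor
  · rintro (⟨j, hj, rfl⟩ | ⟨i, hi, rfl⟩)
    · exact Or.inl ⟨rfl, hj⟩
    · exact Or.inr ⟨hi, rfl⟩
  · rintro (⟨h1, h2⟩ | ⟨h1, h2⟩)
    · exact Or.inl ⟨c.2, h2, by rw [← h1]⟩
    · exact Or.inr ⟨c.1, h1, by rw [← h2]⟩

lemma cells_hookYD1 {r : ℕ} (hr : 1 ≤ r) :
    (hookYD r 1).cells = insert (1, 0) (rowYD r).cells := by
  ext c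
  rw [Finset.mem_insert, YoungDiagram.mem_cells, YoungDiagram.mem_cells, mem_rowYD, mem_hookYD]
  constructor
  · rintro (⟨h1, h2⟩ | ⟨h1, h2⟩)
    · exact Or.inr ⟨h1, h2⟩
    · rcases (by omega : c.1 = 0 ∨ c.1 = 1) with h | h
      · exact Or.inr ⟨h, by omega⟩
      · left; ext <;> simp [h, h2]
  · rintro (rfl | ⟨h1, h2⟩)
    · exact Or.inr ⟨by omega, rfl⟩
    · exact Or.inl ⟨h1, h2⟩

lemma card_hookYD1 {r : ℕ} (hr : 1 ≤ r) : (hookYD r 1).cells.card = r + 1 := by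
  rw [cells_hookYD1 hr, Finset.card_insert_of_notMem, card_rowYD]
  rw [YoungDiagram.mem_cells, mem_rowYD]
  simp

lemma rowLen_hookYD1 {r : ℕ} (hr : 1 ≤ r) (i : ℕ) :
    (hookYD r 1).rowLen i = if i = 0 then r else if i = 1 then 1 else 0 := by
  apply rowLen_eq_of
  intro j
  rw [mem_hookYD]
  split
  · next h => simp [h]; omega
  · next h => split <;> rename_i h2 <;> simp [h, h2] <;> omega

lemma rowYD_ne_hookYD {k r : ℕ} : rowYD k ≠ hookYD r 1 := by
  intro h
  have h1 : ((1 : ℕ), (0 : ℕ)) ∈ hookYD r 1 := mem_hookYD.2 (Or.inr ⟨by omega, rfl⟩)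
  rw [← h, mem_rowYD] at h1
  omega

lemma eq_rowYD_of {μ : YoungDiagram} (h : μ.rowLen 1 = 0) : μ = rowYD (μ.rowLen 0) := by
  ext ⟨i, j⟩
  rw [YoungDiagram.mem_cells, YoungDiagram.mem_cells, mem_rowYD,
    YoungDiagram.mem_iff_lt_rowLen]
  rcases Nat.eq_zero_or_pos i with rfl | hi
  · simp
  · have : μ.rowLen i ≤ μ.rowLen 1 := μ.rowLen_anti 1 i hi
    omega

lemma eq_of_rowLen_eq {μ ν : YoungDiagram} (h : ∀ i, μ.rowLen i = ν.rowLen i) : μ = ν := by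
  ext ⟨i, j⟩
  rw [YoungDiagram.mem_cells, YoungDiagram.mem_cells, YoungDiagram.mem_iff_lt_rowLen,
    YoungDiagram.mem_iff_lt_rowLen, h]

lemma rowLen_le_of_subset {μ ν : YoungDiagram} (h : μ.cells ⊆ ν.cells) (i : ℕ) :
    μ.rowLen i ≤ ν.rowLen i := by
  by_contra h'
  push_neg at h'
  have : (i, ν.rowLen i) ∈ μ := YoungDiagram.mem_iff_lt_rowLen.2 h'
  have := h ((YoungDiagram.mem_cells _).2 this)
  rw [YoungDiagram.mem_cells, YoungDiagram.mem_iff_lt_rowLen] at this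
  omega

lemma IsHStrip.rowLen_succ_le {μ ν : YoungDiagram} (h : IsHStrip μ ν) (i : ℕ) :
    ν.rowLen (i + 1) ≤ μ.rowLen i := by
  by_contra h'
  push_neg at h'
  set j := μ.rowLen i with hj
  have h1 : (i + 1, j) ∈ ν := by
    rw [YoungDiagram.mem_iff_lt_rowLen]; exact h'
  have h2 : (i, j) ∈ ν := ν.up_left_mem (by omega) (le_refl j) h1
  have h3 : (i, j) ∉ μ := by rw [YoungDiagram.mem_iff_lt_rowLen]; omega
  have := h.2 (i, j) ((YoungDiagram.mem_cells _).2 h2)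
    (fun hc => h3 ((YoungDiagram.mem_cells _).1 hc))
  exact this ((YoungDiagram.mem_cells _).2 h1)

lemma fst_lt_card {μ : YoungDiagram} {c : ℕ × ℕ} (h : c ∈ μ.cells) :
    c.1 < μ.cells.card := by
  have hsub : (Finset.range (c.1 + 1)).image (fun i => (i, (0:ℕ))) ⊆ μ.cells := by
    intro x hx
    simp only [Finset.mem_image, Finset.mem_range] at hx
    obtain ⟨i, hi, rfl⟩ := hx
    rw [YoungDiagram.mem_cells] at h ⊢
    exact μ.up_left_mem (by omega) (by omega) h
  have := Finset.card_le_card hsub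
  rw [Finset.card_image_of_injective _ (fun a b hab => by simpa using hab),
    Finset.card_range] at this
  omega

lemma rowLen_eq_zero {μ : YoungDiagram} {i : ℕ} (h : μ.cells.card ≤ i) : μ.rowLen i = 0 := by
  by_contra h'
  have : (i, 0) ∈ μ := YoungDiagram.mem_iff_lt_rowLen.2 (by omega)
  have := fst_lt_card ((YoungDiagram.mem_cells _).2 this)
  simp only at this
  omega

lemma card_eq_sum_rowLen (μ : YoungDiagram) {N : ℕ} (h : μ.cells.card ≤ N) :
    μ.cells.card = ∑ i ∈ Finset.range N, μ.rowLen i := by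
  rw [Finset.card_eq_sum_card_fiberwise (f := Prod.fst) (t := Finset.range N)
    (fun c hc => Finset.mem_range.2 (lt_of_lt_of_le (fst_lt_card hc) h))]
  refine Finset.sum_congr rfl fun i _ => ?_
  rw [YoungDiagram.rowLen_eq_card]
  congr 1
lemma hstrip_row_row {a b : ℕ} (h : a ≤ b) : IsHStrip (rowYD a) (rowYD b) := by
  constructor
  · intro c hc
    rw [YoungDiagram.mem_cells, mem_rowYD] at hc ⊢
    omega
  · intro c hc _ hc2
    rw [YoungDiagram.mem_cells, mem_rowYD] at hc hc2
    omega

lemma hstrip_row_hook {m r : ℕ} (h1 : 1 ≤ m) (h2 : m ≤ r) :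
    IsHStrip (rowYD m) (hookYD r 1) := by
  constructor
  · intro c hc
    rw [YoungDiagram.mem_cells, mem_rowYD] at hc
    rw [YoungDiagram.mem_cells, mem_hookYD]
    omega
  · intro c hc hc1 hc2
    rw [YoungDiagram.mem_cells, mem_hookYD] at hc hc2
    rw [YoungDiagram.mem_cells, mem_rowYD] at hc1
    omega

lemma covers_rowYD {ν : YoungDiagram} {k : ℕ} : Covers ν (rowYD (k + 1)) ↔ ν = rowYD k := by
  constructor
  · rintro ⟨hsub, hcard⟩
    have h1 : ν.rowLen 1 = 0 := by
      have := rowLen_le_of_subset hsub 1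
      rw [rowLen_rowYD] at this
      simpa using this
    have h0 : ν.rowLen 0 = k := by
      have e := eq_rowYD_of h1
      have hc2 : ν.cells.card = (rowYD (ν.rowLen 0)).cells.card := by rw [← e]
      rw [card_rowYD] at hc2
      rw [card_rowYD] at hcard
      omega
    rw [eq_rowYD_of h1, h0]
  · rintro rfl
    constructor
    · intro c hc
      rw [YoungDiagram.mem_cells, mem_rowYD] at hc ⊢
      omega
    · rw [card_rowYD, card_rowYD]

/-- Any horizontal strip over a one-row shape, of total size `k+1`, which contains the
row `(k)`, must be `(k+1)` or the hook `(k,1)`. -/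
lemma notCovers_classify {ν : YoungDiagram} {k m : ℕ} (hs : IsHStrip (rowYD m) ν)
    (hcard : ν.cells.card = k + 1) (hne1 : ν ≠ rowYD (k + 1)) (hne2 : ν ≠ hookYD k 1) :
    ¬ Covers (rowYD k) ν := by
  rintro ⟨hsub, -⟩
  have htail : ∀ i, ν.rowLen (i + 2) = 0 := by
    intro i
    have := hs.rowLen_succ_le (i + 1)
    rw [rowLen_rowYD] at this
    have h2 : ν.rowLen (i + 2) ≤ 0 := by simpa using this
    omega
  have h0 : k ≤ ν.rowLen 0 := by
    have := rowLen_le_of_subset hsub 0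
    rwa [rowLen_rowYD] at this
  have hsum : ν.rowLen 0 + ν.rowLen 1 = k + 1 := by
    have hN : ν.cells.card ≤ k + 2 := by omega
    have := card_eq_sum_rowLen ν hN
    rw [Finset.sum_range_succ'] at this
    rw [Finset.sum_range_succ'] at this
    have hz : ∀ i ∈ Finset.range k, ν.rowLen (i + 1 + 1) = 0 := fun i _ => htail i
    rw [Finset.sum_congr rfl hz, Finset.sum_const, smul_eq_mul, mul_zero] at this
    simp only [zero_add] at this
    omega
  rcases (by omega : ν.rowLen 1 = 0 ∨ (ν.rowLen 1 = 1 ∧ ν.rowLen 0 = k)) with h | ⟨h1, h00⟩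
  · apply hne1
    have := eq_rowYD_of h
    rw [this]
    congr 1
    omega
  · apply hne2
    have hk : 1 ≤ k := by
      have := ν.rowLen_anti 0 1 (by omega)
      omega
    apply eq_of_rowLen_eq
    intro i
    rw [rowLen_hookYD1 hk]
    match i with
    | 0 => simpa using h00
    | 1 => simpa using h1
    | (n+2) => simpa using htail n

/-- Delete the top row of a Young diagram. -/
def eraseTop (μ : YoungDiagram) : YoungDiagram where
  cells := (μ.cells.filter fun c => 1 ≤ c.1).image fun c => (c.1 - 1, c.2)
  isLowerSet := by
    rintro ⟨i1, j1⟩ ⟨i2, j2⟩ ⟨hi, hj⟩ h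
    simp only [Finset.coe_image, Finset.coe_filter, Set.mem_image, Set.mem_setOf_eq,
      Finset.mem_coe] at h ⊢
    obtain ⟨⟨a, b⟩, ⟨hab, ha⟩, heq⟩ := h
    simp only [Prod.mk.injEq] at heq
    obtain ⟨h1, h2⟩ := heq
    refine ⟨(i2 + 1, j2), ⟨?_, by omega⟩, by simp⟩
    rw [YoungDiagram.mem_cells] at hab ⊢
    exact μ.up_left_mem (by omega) (by omega) hab

lemma mem_eraseTop {μ : YoungDiagram} {i j : ℕ} :
    (i, j) ∈ eraseTop μ ↔ (i + 1, j) ∈ μ := by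
  show (i, j) ∈ (eraseTop μ).cells ↔ _
  rw [eraseTop]
  simp only [Finset.mem_image, Finset.mem_filter]
  constructor
  · rintro ⟨⟨a, b⟩, ⟨hab, ha⟩, heq⟩
    simp only [Prod.mk.injEq] at heq
    rw [YoungDiagram.mem_cells] at hab
    have : (a, b) = (i + 1, j) := by
      rw [Prod.ext_iff]; simp only at heq ⊢; omega
    rwa [this] at hab
  · intro h
    exact ⟨(i + 1, j), ⟨(YoungDiagram.mem_cells _).2 h, by omega⟩, by simp⟩

lemma rowLen_eraseTop {μ : YoungDiagram} (i : ℕ) :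
    (eraseTop μ).rowLen i = μ.rowLen (i + 1) := by
  apply rowLen_eq_of
  intro j
  rw [mem_eraseTop, YoungDiagram.mem_iff_lt_rowLen]

lemma hstrip_eraseTop (μ : YoungDiagram) : IsHStrip (eraseTop μ) μ := by
  constructor
  · rintro ⟨i, j⟩ hc
    rw [YoungDiagram.mem_cells, mem_eraseTop] at hc
    rw [YoungDiagram.mem_cells]
    exact μ.up_left_mem (by omega) (le_refl j) hc
  · rintro ⟨i, j⟩ hc h1 h2
    apply h1
    rw [YoungDiagram.mem_cells, mem_eraseTop]
    rwa [YoungDiagram.mem_cells] at h2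

lemma card_eraseTop (μ : YoungDiagram) :
    μ.cells.card = μ.rowLen 0 + (eraseTop μ).cells.card := by
  have hle : (eraseTop μ).cells.card ≤ μ.cells.card := by
    refine le_trans (Finset.card_image_le) (Finset.card_filter_le _ _)
  set N := μ.cells.card with hN
  have h1 := card_eq_sum_rowLen μ (by omega : μ.cells.card ≤ N + 1)
  rw [Finset.sum_range_succ'] at h1
  have h2 := card_eq_sum_rowLen (eraseTop μ) hle
  rw [Finset.sum_congr rfl (fun i _ => rowLen_eraseTop i)] at h2
  omega

lemma rowLen0_pos {μ : YoungDiagram} (h : 0 < μ.cells.card) : 0 < μ.rowLen 0 := by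
  obtain ⟨c, hc⟩ := Finset.card_pos.1 h
  rw [YoungDiagram.mem_cells] at hc
  have : (0, 0) ∈ μ := μ.up_left_mem (Nat.zero_le _) (Nat.zero_le _) hc
  rw [YoungDiagram.mem_iff_lt_rowLen] at this
  omega

lemma rowYD_zero : rowYD 0 = ⊥ := by
  ext c
  rw [YoungDiagram.mem_cells, mem_rowYD]
  simp

/-- minimality of first row in Pieri expansion -/
lemma pieri_min {μ ν : YoungDiagram} {r : ℕ} (hs : IsHStrip μ ν)
    (hc : ν.cells.card = μ.cells.card + r) :
    r ≤ ν.rowLen 0 ∧ (ν.rowLen 0 = r → ∀ i, ν.rowLen (i + 1) = μ.rowLen i) := by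
  set N := ν.cells.card with hN
  have hμN : μ.cells.card ≤ N := by omega
  have h1 : ν.cells.card = ν.rowLen 0 + ∑ i ∈ Finset.range N, ν.rowLen (i + 1) := by
    have := card_eq_sum_rowLen ν (by omega : ν.cells.card ≤ N + 1)
    rw [Finset.sum_range_succ'] at this
    omega
  have h2 : μ.cells.card = ∑ i ∈ Finset.range N, μ.rowLen i := card_eq_sum_rowLen μ hμN
  have hle : ∀ i ∈ Finset.range N, ν.rowLen (i + 1) ≤ μ.rowLen i :=
    fun i _ => hs.rowLen_succ_le i
  have hsle := Finset.sum_le_sum hle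
  constructor
  · omega
  · intro h0 i
    have hsum_eq : ∑ i ∈ Finset.range N, ν.rowLen (i + 1) = ∑ i ∈ Finset.range N, μ.rowLen i := by
      omega
    have := (Finset.sum_eq_sum_iff_of_le hle).1 hsum_eq
    by_cases hi : i < N
    · exact this i (Finset.mem_range.2 hi)
    · push_neg at hi
      rw [rowLen_eq_zero (le_trans hμN hi), rowLen_eq_zero]
      omega
/-- A degree `-1` operator supported on single-box removals in the Schur basis that
satisfies the Leibniz rule and kills `s_{(1)}` and `s_{(2)}` is identically zero. -/
theorem box_removal_leibniz_operator_eq_zero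
    {L : Type*} [CommRing L] [Algebra ℚ L]
    (s : Module.Basis YoungDiagram ℚ L)
    (hone : s (⊥ : YoungDiagram) = 1)
    (hPieri : ∀ (k : ℕ) (lam mu : YoungDiagram),
      s.repr (s (rowYD k) * s lam) mu =
        if mu.cells.card = lam.cells.card + k ∧ IsHStrip lam mu then 1 else 0)
    (xi : Module.End ℚ L)
    (hxi : ∀ lam mu : YoungDiagram,
      s.repr (xi (s lam)) mu = if Covers mu lam then 1 else 0)
    (nabla : Module.End ℚ L)
    (hnabla : ∀ lam mu : YoungDiagram,
      s.repr (nabla (s lam)) mu =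
        if Covers mu lam then (remContent mu lam : ℚ) else 0)
    (zeta : Module.End ℚ L)
    (hzeta : ∀ lam mu : YoungDiagram, ¬ Covers mu lam → s.repr (zeta (s lam)) mu = 0)
    (hleib : ∀ f g : L, zeta (f * g) = zeta f * g + f * zeta g)
    (h1 : zeta (s (rowYD 1)) = 0) (h2 : zeta (s (rowYD 2)) = 0) :
    zeta = 0 := by
  classical
  -- ζ kills 1
  have hz1 : zeta (1 : L) = 0 := by
    have h := hleib 1 1
    simp only [mul_one, one_mul] at h
    have h0 : zeta (1 : L) + 0 = zeta 1 + zeta 1 := by rw [add_zero]; exact h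
    exact (add_left_cancel h0).symm
  -- repr of a basis vector
  have hrepr : ∀ μ ν : YoungDiagram, s.repr (s μ) ν = if ν = μ then 1 else 0 := by
    intro μ ν
    rw [s.repr_self, Finsupp.single_apply]
    by_cases h : ν = μ
    · rw [if_pos h, if_pos h.symm]
    · rw [if_neg (fun hh => h hh.symm), if_neg h]
  -- coefficientwise vanishing helpers
  have hcoeff : ∀ (x : L) (τ : YoungDiagram),
      (∀ ν, s.repr x ν ≠ 0 → s.repr (zeta (s ν)) τ = 0) → s.repr (zeta x) τ = 0 := by
    intro x τ h
    have hx : x = ∑ ν ∈ (s.repr x).support, s.repr x ν • s ν := by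
      conv_lhs => rw [← Module.Basis.linearCombination_repr s x]
      rw [Finsupp.linearCombination_apply]
      rfl
    rw [hx, map_sum, map_sum, Finset.sum_apply']
    refine Finset.sum_eq_zero fun ν hν => ?_
    rw [map_smul, map_smul, Finsupp.smul_apply, h ν (Finsupp.mem_support_iff.1 hν), smul_zero]
  have hzero : ∀ (x : L), (∀ ν, s.repr x ν ≠ 0 → zeta (s ν) = 0) → zeta x = 0 := by
    intro x h
    have hx : x = ∑ ν ∈ (s.repr x).support, s.repr x ν • s ν := by
      conv_lhs => rw [← Module.Basis.linearCombination_repr s x]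
      rw [Finsupp.linearCombination_apply]
      rfl
    rw [hx, map_sum]
    refine Finset.sum_eq_zero fun ν hν => ?_
    rw [map_smul, h ν (Finsupp.mem_support_iff.1 hν), smul_zero]
  -- the coefficient of ζ on one-row shapes
  set c : ℕ → ℚ := fun m => s.repr (zeta (s (rowYD (m + 1)))) (rowYD m) with hcdef
  have Z1 : ∀ m, zeta (s (rowYD (m + 1))) = c m • s (rowYD m) := by
    intro m
    apply s.repr.injective
    ext ν
    rw [map_smul, Finsupp.smul_apply, hrepr]
    by_cases hν : ν = rowYD m
    · rw [hν, if_pos rfl, smul_eq_mul, mul_one]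
    · rw [if_neg hν, smul_zero]
      exact hzeta _ _ (fun hcov => hν (covers_rowYD.1 hcov))
  -- the key Pieri/Leibniz coefficient identity
  have eqGen : ∀ (n q : ℕ), 1 ≤ q → zeta (s (rowYD q)) = 0 →
      c n = c (n + q) + s.repr (zeta (s (hookYD (n + q) 1))) (rowYD (n + q)) := by
    intro n q hq hkq
    have e2 : s.repr (zeta (s (rowYD q) * s (rowYD (n + 1)))) (rowYD (n + q)) = c n := by
      rw [hleib, hkq, zero_mul, zero_add, Z1 n, mul_smul_comm, map_smul, Finsupp.smul_apply,
        hPieri q (rowYD n) (rowYD (n + q))]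
      rw [if_pos ⟨by rw [card_rowYD, card_rowYD], hstrip_row_row (by omega)⟩]
      rw [smul_eq_mul, mul_one]
    set w := s (rowYD q) * s (rowYD (n + 1)) - s (rowYD (n + q + 1)) - s (hookYD (n + q) 1)
      with hw
    have e3 : s.repr (zeta w) (rowYD (n + q)) = 0 := by
      apply hcoeff
      intro ν hν
      rw [hw, map_sub, map_sub, Finsupp.sub_apply, Finsupp.sub_apply,
        hPieri q (rowYD (n + 1)) ν, hrepr, hrepr, card_rowYD] at hν
      by_cases hν1 : ν = rowYD (n + q + 1)
      · exfalso
        apply hν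
        subst hν1
        rw [if_pos ⟨by rw [card_rowYD]; omega, hstrip_row_row (by omega)⟩, if_pos rfl,
          if_neg (fun hh => rowYD_ne_hookYD hh)]
        ring
      · by_cases hν2 : ν = hookYD (n + q) 1
        · exfalso
          apply hν
          subst hν2
          rw [if_pos ⟨by rw [card_hookYD1 (by omega)]; omega,
            hstrip_row_hook (by omega) (by omega)⟩,
            if_neg (fun hh => rowYD_ne_hookYD hh.symm), if_pos rfl]
          ring
        · rw [if_neg hν1, if_neg hν2, sub_zero, sub_zero] at hν
          have hcond : ν.cells.card = n + 1 + q ∧ IsHStrip (rowYD (n + 1)) ν := by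
            by_contra hcon
            rw [if_neg hcon] at hν
            exact hν rfl
          have hcard' : ν.cells.card = (n + q) + 1 := by omega
          exact hzeta ν (rowYD (n + q))
            (notCovers_classify hcond.2 hcard' hν1 hν2)
    have e4 : s (rowYD q) * s (rowYD (n + 1)) =
        s (rowYD (n + q + 1)) + s (hookYD (n + q) 1) + w := by
      rw [hw]; ring
    have e5 := congrArg (fun y => s.repr (zeta y) (rowYD (n + q))) e4
    simp only [map_add, Finsupp.add_apply] at e5
    rw [e2, e3, Z1 (n + q), map_smul, Finsupp.smul_apply, hrepr, if_pos rfl] at e5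
    simp only [smul_eq_mul, mul_one, add_zero] at e5
    exact e5
  -- all one-row coefficients vanish
  have hc0 : c 0 = 0 := by
    simp only [hcdef, Nat.zero_add]
    rw [h1]
    simp
  have step : ∀ n, c (n + 1) = c n := by
    intro n
    have A := eqGen (n + 1) 1 (by omega) h1
    have B := eqGen n 2 (by omega) h2
    simp only [show n + 1 + 1 = n + 2 from by omega] at A
    linarith
  have hc : ∀ n, c n = 0 := by
    intro n
    induction n with
    | zero => exact hc0
    | succ k ih => rw [step k]; exact ih
  have hzrow : ∀ k, zeta (s (rowYD k)) = 0 := by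
    intro k
    cases k with
    | zero => rw [rowYD_zero, hone]; exact hz1
    | succ m => rw [Z1 m, hc m, zero_smul]
  -- main induction : ζ kills every Schur basis element
  have main : ∀ (lam : YoungDiagram), zeta (s lam) = 0 := by
    have H : ∀ n (lam : YoungDiagram), lam.cells.card = n → zeta (s lam) = 0 := by
      intro n
      induction n using Nat.strong_induction_on with
      | _ n ihn =>
        have inner : ∀ m (lam : YoungDiagram), lam.cells.card = n →
            n ≤ lam.rowLen 0 + m → zeta (s lam) = 0 := by
          intro m
          induction m with
          | zero =>
            intro lam hcard hle
            have hE := card_eraseTop lam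
            have h1' : lam.rowLen 1 = 0 := by
              have h := rowLen_eraseTop (μ := lam) 0
              rw [rowLen_eq_zero (show (eraseTop lam).cells.card ≤ 0 by omega)] at h
              simpa using h.symm
            rw [eq_rowYD_of h1']
            exact hzrow _
          | succ m ihm =>
            intro lam hcard hle
            by_cases hcase : n ≤ lam.rowLen 0 + m
            · exact ihm lam hcard hcase
            push_neg at hcase
            have hrpos : 0 < lam.rowLen 0 := rowLen0_pos (by omega)
            have hE := card_eraseTop lam
            have hmucard : (eraseTop lam).cells.card = n - lam.rowLen 0 := by omega
            have hzmu : zeta (s (eraseTop lam)) = 0 :=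
              ihn (n - lam.rowLen 0) (by omega) (eraseTop lam) hmucard
            have hprod : zeta (s (rowYD (lam.rowLen 0)) * s (eraseTop lam)) = 0 := by
              rw [hleib, hzrow (lam.rowLen 0), hzmu, zero_mul, mul_zero, add_zero]
            have hwz : zeta (s (rowYD (lam.rowLen 0)) * s (eraseTop lam) - s lam) = 0 := by
              apply hzero
              intro ν hν
              rw [map_sub, Finsupp.sub_apply, hPieri (lam.rowLen 0) (eraseTop lam) ν,
                hrepr] at hν
              by_cases hνl : ν = lam
              · exfalso
                apply hν
                subst hνl
                rw [if_pos ⟨by omega, hstrip_eraseTop ν⟩, if_pos rfl, sub_self]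
              · rw [if_neg hνl, sub_zero] at hν
                have hcond : ν.cells.card = (eraseTop lam).cells.card + lam.rowLen 0 ∧
                    IsHStrip (eraseTop lam) ν := by
                  by_contra hcon
                  rw [if_neg hcon] at hν
                  exact hν rfl
                have hmin := pieri_min hcond.2 hcond.1
                have hgt : lam.rowLen 0 < ν.rowLen 0 := by
                  rcases Nat.lt_or_ge (lam.rowLen 0) (ν.rowLen 0) with h | h
                  · exact h
                  exfalso
                  apply hνl
                  have h0 : ν.rowLen 0 = lam.rowLen 0 := le_antisymm h hmin.1
                  apply eq_of_rowLen_eq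
                  intro i
                  cases i with
                  | zero => exact h0
                  | succ j => rw [hmin.2 h0 j, rowLen_eraseTop]
                exact ihm ν (by omega) (by omega)
            have hsplit : s lam = s (rowYD (lam.rowLen 0)) * s (eraseTop lam) -
                (s (rowYD (lam.rowLen 0)) * s (eraseTop lam) - s lam) := by ring
            rw [hsplit, map_sub, hprod, hwz, sub_zero]
        intro lam hcard
        exact inner n lam hcard (by omega)
    exact fun lam => H _ lam rfl
  exact s.ext fun lam => by simp [main lam]
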